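/- arXiv:2110.11381 — 3 statements merged into one kernel-verified Lean document; each statement's English description precedes it below -/
import Mathlib

section
/- For any multisegment 𝔪, the multisegments 𝔫 with 𝔫' = 𝔪 are exactly those of the form 𝔫 = 𝔪^+ + ∂(γ) for some γ ∈ Q_+; that is, for every γ ∈ Q_+ one has (𝔪^+ + ∂(γ))' = 𝔪, and conversely every 𝔫 with 𝔫' = 𝔪 arises this way for a unique γ. -/
/-- Multisegment truncation `𝔪 ↦ 𝔪'`. -/
def mderiv (m : Multiset (ℤ × ℤ)) : Multiset (ℤ × ℤ) :=
  (m.filter (fun p => p.1 < p.2)).map (fun p => (p.1 + 1, p.2))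

/-- The extension `𝔪 ↦ 𝔪^+`. -/
def mplus (m : Multiset (ℤ × ℤ)) : Multiset (ℤ × ℤ) :=
  m.map (fun p => (p.1 - 1, p.2))

/-- The additive map `∂ : Q₊ → 𝔐`, sending `α_i` to `Δ(i,i)`; here `Q₊` is the
free commutative monoid on `ℤ`, modeled as `Multiset ℤ`. -/
def dSingle (γ : Multiset ℤ) : Multiset (ℤ × ℤ) := γ.map (fun i => (i, i))

/-- the antiderivatives of `𝔪` are exactly `𝔪^+ + ∂(γ)`, `γ ∈ Q₊`,
with `γ` unique. -/
theorem antiderivatives_of_multisegment (m : Multiset (ℤ × ℤ))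
    (h : ∀ p ∈ m, p.1 ≤ p.2) :
    (∀ γ : Multiset ℤ, mderiv (mplus m + dSingle γ) = m) ∧
    (∀ n : Multiset (ℤ × ℤ), (∀ p ∈ n, p.1 ≤ p.2) → mderiv n = m →
      ∃! γ : Multiset ℤ, n = mplus m + dSingle γ) := by
  constructor
  · intro γ
    unfold mderiv mplus dSingle
    rw [Multiset.filter_add]
    have h1 : Multiset.filter (fun p : ℤ × ℤ => p.1 < p.2)
        (m.map fun p => (p.1 - 1, p.2)) = m.map fun p => (p.1 - 1, p.2) := by
      rw [Multiset.filter_eq_self]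
      intro p hp
      obtain ⟨q, hq, rfl⟩ := Multiset.mem_map.mp hp
      have := h q hq
      simp only
      omega
    have h2 : Multiset.filter (fun p : ℤ × ℤ => p.1 < p.2)
        (γ.map fun i => (i, i)) = 0 := by
      rw [Multiset.filter_eq_nil]
      intro p hp
      obtain ⟨i, _, rfl⟩ := Multiset.mem_map.mp hp
      simp
    rw [h1, h2, add_zero, Multiset.map_map]
    convert Multiset.map_id m using 2 with p
    simp [Prod.ext_iff]
  · intro n hn hd
    have hm : mplus m = n.filter (fun p => p.1 < p.2) := by
      unfold mplus
      rw [← hd]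
      unfold mderiv
      rw [Multiset.map_map]
      rw [Multiset.map_congr rfl (fun p hp => ?_), Multiset.map_id]
      show ((p.1 + 1 - 1 : ℤ), p.2) = p
      rw [Prod.ext_iff]
      exact ⟨by omega, rfl⟩
    have hds : dSingle ((n.filter fun p : ℤ × ℤ => ¬ p.1 < p.2).map Prod.fst)
        = n.filter (fun p : ℤ × ℤ => ¬ p.1 < p.2) := by
      unfold dSingle
      rw [Multiset.map_map]
      rw [Multiset.map_congr rfl (fun p hp => ?_), Multiset.map_id]
      have hp1 := Multiset.of_mem_filter hp
      have hp2 := hn p (Multiset.mem_of_mem_filter hp)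
      show ((p.1 : ℤ), p.1) = p
      rw [Prod.ext_iff]
      exact ⟨rfl, by omega⟩
    refine ⟨(n.filter fun p : ℤ × ℤ => ¬ p.1 < p.2).map Prod.fst, ?_, ?_⟩
    · show n = mplus m + dSingle _
      rw [hm, hds, Multiset.filter_add_not]
    · intro γ' hγ'
      have hcancel : dSingle γ' = dSingle ((n.filter fun p : ℤ × ℤ => ¬ p.1 < p.2).map Prod.fst) := by
        have : mplus m + dSingle γ' = mplus m + dSingle ((n.filter fun p : ℤ × ℤ => ¬ p.1 < p.2).map Prod.fst) := by
          rw [← hγ', hm, hds, Multiset.filter_add_not]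
        exact add_left_cancel this
      have : (dSingle γ').map Prod.fst = (dSingle ((n.filter fun p : ℤ × ℤ => ¬ p.1 < p.2).map Prod.fst)).map Prod.fst := by
        rw [hcancel]
      simpa [dSingle, Multiset.map_map] using this
end

section
/- If a multipartition μ = (μ^1, …, μ^l) is κ-restricted for a multicharge κ, then μ' = ((μ^1)', …, (μ^l)') is also κ-restricted, where for a partition ν the partition ν' is obtained by subtracting 1 from each nonzero part and discarding parts that become 0. -/
/-- The `j`-th part of a partition (given as a list), `0` outside range. -/
def part (l : List ℕ) (j : ℤ) : ℕ := if 1 ≤ j then l.getD (j - 1).toNat 0 else 0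

/-- A list is a partition when it is weakly decreasing with positive entries. -/
def IsPartition (l : List ℕ) : Prop := l.Chain' (· ≥ ·) ∧ ∀ x ∈ l, 0 < x

/-- The truncated partition `ν'`: subtract `1` from each part, discard zeros. -/
def pderiv (l : List ℕ) : List ℕ := (l.map (· - 1)).filter (fun x => 0 < x)

/-- `κ`-restrictedness of a multipartition. -/
def Restricted (l : ℕ) (κ : ℕ → ℤ) (μ : ℕ → List ℕ) : Prop :=
  ∀ i, i + 1 < l → ∀ j : ℤ, 1 ≤ j →
    part (μ i) (j + κ i - κ (i + 1)) ≤ part (μ (i + 1)) j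

lemma pderiv_cons_of_one_lt {a : ℕ} (t : List ℕ) (ha : 1 < a) :
    pderiv (a :: t) = (a - 1) :: pderiv t := by
  simp [pderiv, Nat.sub_pos_of_lt ha]

lemma pderiv_eq_nil_of_forall_le_one {l : List ℕ} (hl : ∀ x ∈ l, x ≤ 1) : pderiv l = [] := by
  simp only [pderiv, List.filter_eq_nil_iff, List.mem_map]
  rintro _ ⟨x, hx, rfl⟩
  simpa using hl x hx

lemma List.getD_le_of_forall_le {l : List ℕ} {b : ℕ} (hl : ∀ x ∈ l, x ≤ b) (n : ℕ) :
    l.getD n 0 ≤ b := by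
  rw [List.getD_eq_getElem?_getD]
  cases h : l[n]? with
  | none => simp
  | some x => simpa using hl x (List.mem_of_getElem? h)

/-- Since the parts decrease, those `≤ 1` form a suffix, so discarding the zeros of `ν'`
does not shift the positions of the remaining parts. -/
lemma getD_pderiv {l : List ℕ} (hl : l.IsChain (· ≥ ·)) (n : ℕ) :
    (pderiv l).getD n 0 = l.getD n 0 - 1 := by
  induction l generalizing n with
  | nil => simp [pderiv]
  | cons a t ih =>
    rcases lt_or_ge 1 a with ha | ha
    · rw [pderiv_cons_of_one_lt t ha]
      cases n with
      | zero => simp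
      | succ n => simpa using ih hl.tail n
    · have hle : ∀ x ∈ a :: t, x ≤ 1 := by
        intro x hx
        rcases List.mem_cons.mp hx with rfl | hxt
        · exact ha
        · exact ((List.pairwise_cons.mp (List.isChain_iff_pairwise.mp hl)).1 x hxt).trans ha
      rw [pderiv_eq_nil_of_forall_le_one hle, List.getD_nil]
      have := List.getD_le_of_forall_le hle n
      omega

lemma part_pderiv {l : List ℕ} (hl : l.IsChain (· ≥ ·)) (j : ℤ) :
    part (pderiv l) j = part l j - 1 := by
  unfold part
  split_ifs
  · exact getD_pderiv hl _
  · rfl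

theorem deriv_restricted_general (l : ℕ) (κ : ℕ → ℤ) (μ : ℕ → List ℕ)
    (hpart : ∀ i, i < l → IsPartition (μ i))
    (hres : Restricted l κ μ) :
    Restricted l κ (fun i => pderiv (μ i)) := by
  intro i hi j hj
  rw [part_pderiv (hpart i (by omega)).1, part_pderiv (hpart (i + 1) hi).1]
  exact Nat.sub_le_sub_right (hres i hi j hj) 1

/-- if `μ` is `κ`-restricted then so is `μ'`. -/
theorem deriv_restricted (l : ℕ) (κ : ℕ → ℤ) (μ : ℕ → List ℕ)
    (hκ : ∀ i, i + 1 < l → κ (i + 1) ≤ κ i)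
    (hpart : ∀ i, i < l → IsPartition (μ i))
    (hres : Restricted l κ μ) :
    Restricted l κ (fun i => pderiv (μ i)) :=
  deriv_restricted_general l κ μ hpart hres
end

section
/- Let 𝔪 be a multisegment, written as a sum of segments Δ_{i,j} = Δ(−k_i − μ^i_{ℓ(μ^i)−j} + ℓ(μ^i) − j, −k_i + ℓ(μ^i) − j − 1) for 1 ≤ i ≤ l and 0 ≤ j ≤ ℓ(μ^i) − 1, arising from a proper κ-restricted multipartition μ = (μ^1,…,μ^l) with multicharge κ = (k_1,…,k_l). Then the depth function satisfies 𝔡(i, j) = j for all valid indices, where the depth of an index is the maximal length of a strict ≪-increasing chain starting at its segment: 𝔡(i,j) = max{ m : there exist indices (i_0,j_0) = (i,j), (i_1,j_1), …, (i_m,j_m) with Δ_{i_{r},j_{r}} ≪ Δ_{i_{r+1},j_{r+1}} for all r }. -/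
/-- Begin point of the segment `Δ_{i,j}` attached to the multipartition data:
`b(Δ_{i,j}) = −k_i − μ^i_{ℓ(μ^i)−j} + ℓ(μ^i) − j`. -/
def segB (κ : ℕ → ℤ) (μ : ℕ → List ℕ) (i j : ℕ) : ℤ :=
  -κ i - (part (μ i) (((μ i).length : ℤ) - j) : ℤ) + (((μ i).length : ℤ) - j)

/-- End point: `e(Δ_{i,j}) = −k_i + ℓ(μ^i) − j − 1`. -/
def segE (κ : ℕ → ℤ) (μ : ℕ → List ℕ) (i j : ℕ) : ℤ :=
  -κ i + ((μ i).length : ℤ) - j - 1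

lemma getD_succ_le (M : List ℕ) (h : M.Chain' (· ≥ ·)) (n : ℕ) :
    M.getD (n + 1) 0 ≤ M.getD n 0 := by
  by_cases hn : n + 1 < M.length
  · rw [List.getD_eq_getElem M 0 hn, List.getD_eq_getElem M 0 (by omega)]
    exact List.pairwise_iff_getElem.mp (List.isChain_iff_pairwise.mp h) n (n+1)
      (by omega) hn (by omega)
  · rw [List.getD_eq_default M 0 (by omega)]
    exact Nat.zero_le _

lemma part_succ_le (M : List ℕ) (h : M.Chain' (· ≥ ·)) (k : ℤ) (hk : 1 ≤ k) :
    part M (k + 1) ≤ part M k := by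
  unfold part
  rw [if_pos (by omega : (1:ℤ) ≤ k + 1), if_pos hk]
  have h1 : (k + 1 - 1).toNat = (k - 1).toNat + 1 := by omega
  rw [h1]
  exact getD_succ_le M h _

/-- for a proper `κ`-restricted multipartition, the depth of the
index `(i,j)` — the maximal length of a strictly `≪`-increasing chain of valid
indices starting at `(i,j)` — equals `j`. -/
theorem depth_eq_j (l : ℕ) (κ : ℕ → ℤ) (μ : ℕ → List ℕ)
    (hκ : ∀ i, i + 1 < l → κ (i + 1) ≤ κ i)
    (hpart : ∀ i, i < l → IsPartition (μ i))
    (hres : Restricted l κ μ)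
    (hproper : ∀ i, i + 1 < l →
      ((μ i).length : ℤ) - κ i = ((μ (i + 1)).length : ℤ) - κ (i + 1)) :
    ∀ i j : ℕ, i < l → j < (μ i).length →
      sSup {m : ℕ | ∃ c : ℕ → ℕ × ℕ, c 0 = (i, j) ∧
        (∀ r, r ≤ m → (c r).1 < l ∧ (c r).2 < (μ (c r).1).length) ∧
        (∀ r, r < m →
          segB κ μ (c r).1 (c r).2 < segB κ μ (c (r + 1)).1 (c (r + 1)).2 ∧
          segE κ μ (c r).1 (c r).2 < segE κ μ (c (r + 1)).1 (c (r + 1)).2)} = j := by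
  intro i j hi hj
  -- the quantity ℓ(μ^a) - κ a is independent of a
  have h0 : ∀ a, a < l → ((μ a).length : ℤ) - κ a = ((μ 0).length : ℤ) - κ 0 := by
    intro a
    induction a with
    | zero => intro _; rfl
    | succ n ih => intro ha; rw [← hproper n ha]; exact ih (by omega)
  have hC : ∀ a, a < l → ((μ a).length : ℤ) - κ a = ((μ i).length : ℤ) - κ i := by
    intro a ha; rw [h0 a ha, ← h0 i hi]
  -- upper bound
  have hub : ∀ m ∈ {m : ℕ | ∃ c : ℕ → ℕ × ℕ, c 0 = (i, j) ∧
        (∀ r, r ≤ m → (c r).1 < l ∧ (c r).2 < (μ (c r).1).length) ∧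
        (∀ r, r < m →
          segB κ μ (c r).1 (c r).2 < segB κ μ (c (r + 1)).1 (c (r + 1)).2 ∧
          segE κ μ (c r).1 (c r).2 < segE κ μ (c (r + 1)).1 (c (r + 1)).2)},
      m ≤ j := by
    rintro m ⟨c, hc0, hval, hstep⟩
    have hdec : ∀ r, r < m → (c (r + 1)).2 < (c r).2 := by
      intro r hr
      have h1 := (hstep r hr).2
      have e1 := hC (c r).1 (hval r (le_of_lt hr)).1
      have e2 := hC (c (r + 1)).1 (hval (r + 1) hr).1
      unfold segE at h1
      omega
    have key : ∀ r, r ≤ m → (c r).2 + r ≤ j := by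
      intro r
      induction r with
      | zero => intro _; simp [hc0]
      | succ n ih =>
        intro hr
        have h1 := hdec n (by omega)
        have h2 := ih (by omega)
        omega
    have := key m le_rfl
    omega
  -- j is attained
  have hmem : j ∈ {m : ℕ | ∃ c : ℕ → ℕ × ℕ, c 0 = (i, j) ∧
        (∀ r, r ≤ m → (c r).1 < l ∧ (c r).2 < (μ (c r).1).length) ∧
        (∀ r, r < m →
          segB κ μ (c r).1 (c r).2 < segB κ μ (c (r + 1)).1 (c (r + 1)).2 ∧
          segE κ μ (c r).1 (c r).2 < segE κ μ (c (r + 1)).1 (c (r + 1)).2)} := by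
    refine ⟨fun r => (i, j - r), by simp, ?_, ?_⟩
    · intro r _
      exact ⟨hi, by simp; omega⟩
    · intro r hr
      simp only
      constructor
      · unfold segB
        have hb : (↑(j - (r + 1)) : ℤ) = ↑(j - r) - 1 := by omega
        rw [hb]
        have he : ((μ i).length : ℤ) - (↑(j - r) - 1) = (((μ i).length : ℤ) - ↑(j - r)) + 1 := by
          ring
        rw [he]
        have hk : (1:ℤ) ≤ ((μ i).length : ℤ) - ↑(j - r) := by omega
        have hmono := part_succ_le (μ i) (hpart i hi).1 _ hk
        omega
      · unfold segE
        omega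
  exact le_antisymm (csSup_le ⟨j, hmem⟩ hub) (le_csSup ⟨j, hub⟩ hmem)
end
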